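/- Let Λ and H be countable discrete groups with Λ having at least two elements. Then the wreath product Λ ≀ H is residually finite if and only if Λ and H are both residually finite and either H is finite or Λ is abelian. -/

import Mathlib

universe u v w

/-- Conjugation by `g` as a homomorphism of a normal subgroup `N`: `n ↦ g⁻¹ n g`. -/
def conjHom {G : Type u} [Group G] {N : Subgroup G} (hN : N.Normal) (g : G) : N →* N where
  toFun n := ⟨g⁻¹ * (n : G) * g, by simpa using hN.conj_mem (n : G) n.2 g⁻¹⟩
  map_one' := by ext; simp
  map_mul' a b := by ext; simp [mul_assoc]

/-- The conjugate representation `σ^g`, `σ^g(n) = σ(g⁻¹ n g)`. -/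
def conjRep {G : Type u} [Group G] {N : Subgroup G} (hN : N.Normal) {m : ℕ}
    (σ : N →* Matrix.unitaryGroup (Fin m) ℂ) (g : G) : N →* Matrix.unitaryGroup (Fin m) ℂ :=
  σ.comp (conjHom hN g)

/-- Unitary equivalence of two finite-dimensional unitary representations. -/
def UnitarilyEquiv {G : Type u} [Group G] {m : ℕ}
    (σ τ : G →* Matrix.unitaryGroup (Fin m) ℂ) : Prop :=
  ∃ V : Matrix.unitaryGroup (Fin m) ℂ, ∀ g : G, τ g = V * σ g * V⁻¹

/-- Irreducibility of a finite-dimensional unitary representation. -/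
def IsIrreducibleRep {G : Type u} [Group G] {m : ℕ}
    (σ : G →* Matrix.unitaryGroup (Fin m) ℂ) : Prop :=
  ∀ W : Submodule ℂ (Fin m → ℂ),
    (∀ g : G, ∀ v ∈ W, (σ g : Matrix (Fin m) (Fin m) ℂ).mulVec v ∈ W) → W = ⊥ ∨ W = ⊤

/-- A representation of `N` has finite `H`-orbit if the conjugates `σ^h`, `h ∈ H`, fall into
finitely many unitary equivalence classes. -/
def HasFiniteHOrbit {G : Type u} [Group G] {N : Subgroup G} (hN : N.Normal) (H : Subgroup G)
    {m : ℕ} (σ : N →* Matrix.unitaryGroup (Fin m) ℂ) : Prop :=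
  ∃ S : Finset (N →* Matrix.unitaryGroup (Fin m) ℂ),
    ∀ h ∈ H, ∃ τ ∈ S, UnitarilyEquiv (conjRep hN σ h) τ

/-- `(K, β)` is a Bohr compactification of `G`. -/
def IsBohrCompactification (G : Type u) [Group G] [TopologicalSpace G]
    (K : Type v) [Group K] [TopologicalSpace K] [IsTopologicalGroup K] [CompactSpace K]
    [T2Space K] (β : G →* K) : Prop :=
  Continuous β ∧ DenseRange β ∧
    ∀ (L : Type w) [Group L] [TopologicalSpace L] [IsTopologicalGroup L] [CompactSpace L]
      [T2Space L] (α : G →* L), Continuous α →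
        ∃ α' : K →* L, Continuous α' ∧ α = α'.comp β

/-- `(K, α)` is a profinite completion of `G`. -/
def IsProfiniteCompletion (G : Type u) [Group G] [TopologicalSpace G]
    (K : Type v) [Group K] [TopologicalSpace K] [IsTopologicalGroup K] [CompactSpace K]
    [T2Space K] [TotallyDisconnectedSpace K] (α : G →* K) : Prop :=
  Continuous α ∧ DenseRange α ∧
    ∀ (L : Type w) [Group L] [TopologicalSpace L] [IsTopologicalGroup L] [CompactSpace L]
      [T2Space L] [TotallyDisconnectedSpace L] (γ : G →* L), Continuous γ →
        ∃ γ' : K →* L, Continuous γ' ∧ γ = γ'.comp α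
/-- The restricted direct product `⊕_{h ∈ H} Λ`: finitely supported functions `H → Λ`. -/
def restrictedProduct (H : Type u) (Λ : Type v) [Group Λ] : Subgroup (H → Λ) where
  carrier := {f | (Function.mulSupport f).Finite}
  one_mem' := by simp
  mul_mem' := by
    intro f g hf hg
    exact Set.Finite.subset (hf.union hg) (Function.mulSupport_mul f g)
  inv_mem' := by
    intro f hf
    simpa using hf

/-- The shift of a finitely supported function: `(h · f)(h') = f (h⁻¹ h')`. -/
def shiftEquiv (Λ : Type v) (H : Type u) [Group Λ] [Group H] (h : H) :
    restrictedProduct H Λ ≃* restrictedProduct H Λ where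
  toFun f := ⟨fun h' => (f : H → Λ) (h⁻¹ * h'), by
    refine Set.Finite.subset (f.2.image (h * ·)) ?_
    intro h' hh'
    exact ⟨h⁻¹ * h', hh', by group⟩⟩
  invFun f := ⟨fun h' => (f : H → Λ) (h * h'), by
    refine Set.Finite.subset (f.2.image (h⁻¹ * ·)) ?_
    intro h' hh'
    exact ⟨h * h', hh', by group⟩⟩
  left_inv f := by ext h'; simp
  right_inv f := by ext h'; simp
  map_mul' f g := by ext h'; simp [Subgroup.coe_mul]

/-- The shift action of `H` on `⊕_{h ∈ H} Λ`. -/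
def shiftAut (Λ : Type v) (H : Type u) [Group Λ] [Group H] :
    H →* MulAut (restrictedProduct H Λ) where
  toFun h := shiftEquiv Λ H h
  map_one' := by
    ext f h'
    simp [shiftEquiv]
  map_mul' h₁ h₂ := by
    ext f h'
    simp [shiftEquiv, mul_assoc]

/-- The wreath product `Λ ≀ H`. -/
def Wreath (Λ : Type v) (H : Type u) [Group Λ] [Group H] : Type (max u v) :=
  restrictedProduct H Λ ⋊[shiftAut Λ H] H

instance (Λ : Type v) (H : Type u) [Group Λ] [Group H] : Group (Wreath Λ H) :=
  inferInstanceAs (Group (restrictedProduct H Λ ⋊[shiftAut Λ H] H))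
/-- A discrete group is residually finite if every nontrivial element is sent to a nontrivial
element by some homomorphism onto a finite group. -/
def IsRFGroup (G : Type u) [Group G] : Prop :=
  ∀ g : G, g ≠ 1 → ∃ (F : Type) (_ : Group F) (_ : Finite F) (π : G →* F),
    Function.Surjective π ∧ π g ≠ 1

/-!
Residual finiteness passes to the subgroups `Λ` and `H`. If `H` is infinite and `a, b ∈ Λ` do
not commute, every homomorphism from `Λ ≀ H` to a finite group kills some `h ≠ 1` of `H`;
conjugation by `h` then identifies the images of the copies of `Λ` at `1` and at `h`, which
commute, so the commutator of the copies of `a` and `b` at `1` dies.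

Conversely, elements outside the base group are seen in a finite quotient of `H`. A base element
`f` with `f y ∉ N`, for `N` of finite index in `Λ`, is seen in `(Λ/N) ≀ H` when `H` is finite.
When `Λ` is abelian it is seen in the finite group `(Λ/N) ≀ (H/M)` through the map that
multiplies the values of `f` over each coset of `M`, where `M` has finite index and separates
the finitely many points of the support of `f`.
-/

open Function

theorem isRFGroup_iff_residuallyFinite {G : Type*} [Group G] :
    IsRFGroup G ↔ Group.ResiduallyFinite G := by
  refine ⟨fun h ↦ Group.residuallyFinite_of_forall_exists_finite_monoidHom fun g hg ↦ ?_,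
    fun _ g hg ↦ ?_⟩
  · obtain ⟨F, hF, hFin, π, -, hπ⟩ := h g hg
    exact ⟨F, hF, hFin, π, hπ⟩
  · obtain ⟨N, hN⟩ := Group.exists_finiteIndexNormalSubgroup_notMem g hg
    let e : G ⧸ N.toSubgroup ≃* Shrink.{0} (G ⧸ N.toSubgroup) := Shrink.mulEquiv.symm
    refine ⟨_, inferInstance, inferInstance, e.toMonoidHom.comp (QuotientGroup.mk' _),
      e.surjective.comp (QuotientGroup.mk'_surjective _), ?_⟩
    simpa [FiniteIndexNormalSubgroup.mem_toSubgroup_iff] using hN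

namespace Group

variable {G : Type*} [Group G]

theorem ResiduallyFinite.of_injective {K : Type*} [Group K] [ResiduallyFinite G] (f : K →* G)
    (hf : Injective f) : ResiduallyFinite K := by
  refine residuallyFinite_iff_forall_finiteIndexNormalSubgroup.mpr fun k hk ↦ hf ?_
  rw [map_one]
  exact eq_one_iff_forall_finiteIndexNormalSubroup _ fun N ↦ hk (N.comap f)

theorem exists_finiteIndexNormalSubgroup_notMem_of_monoidHom {F : Type*} [Group F] [Finite F]
    (f : G →* F) {g : G} (hg : f g ≠ 1) : ∃ N : FiniteIndexNormalSubgroup G, g ∉ N :=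
  ⟨.ofSubgroup f.ker, by simpa [← FiniteIndexNormalSubgroup.mem_toSubgroup_iff] using hg⟩

theorem exists_finiteIndexNormalSubgroup_forall_notMem [ResiduallyFinite G] {S : Set G}
    (hS : S.Finite) (h1 : 1 ∉ S) : ∃ N : FiniteIndexNormalSubgroup G, ∀ s ∈ S, s ∉ N := by
  induction S, hS using Set.Finite.induction_on with
  | empty => exact ⟨.ofSubgroup ⊤, by simp⟩
  | @insert a S _ _ ih =>
    obtain ⟨N, hN⟩ := ih fun h ↦ h1 (Set.mem_insert_of_mem a h)
    obtain ⟨M, hM⟩ := exists_finiteIndexNormalSubgroup_notMem a fun h ↦ h1 (h ▸ Set.mem_insert a S)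
    exact ⟨N ⊓ M, Set.forall_mem_insert.mpr
      ⟨fun h ↦ hM (inf_le_right (a := N) h), fun s hs h ↦ hN s hs (inf_le_left (b := M) h)⟩⟩

theorem exists_finiteIndexNormalSubgroup_injOn [ResiduallyFinite G] {T : Set G} (hT : T.Finite) :
    ∃ N : FiniteIndexNormalSubgroup G, T.InjOn (QuotientGroup.mk : G → G ⧸ N.toSubgroup) := by
  obtain ⟨N, hN⟩ := exists_finiteIndexNormalSubgroup_forall_notMem
    (hT.offDiag.image fun p ↦ p.1⁻¹ * p.2) (by simp [inv_mul_eq_one])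
  refine ⟨N, fun x hx y hy hxy ↦ by_contra fun hne ↦ hN _ ⟨(x, y), ⟨hx, hy, hne⟩, rfl⟩ ?_⟩
  simpa [QuotientGroup.eq, FiniteIndexNormalSubgroup.mem_toSubgroup_iff] using hxy

end Group

namespace restrictedProduct

variable {H Λ : Type*} [Group Λ]

theorem exists_apply_ne_one {f : restrictedProduct H Λ} (hf : f ≠ 1) :
    ∃ y, (f : H → Λ) y ≠ 1 := by
  by_contra! h
  exact hf (Subtype.ext (funext h))

section Single

variable [DecidableEq H]

def single (x : H) : Λ →* restrictedProduct H Λ :=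
  (MonoidHom.mulSingle (fun _ ↦ Λ) x).codRestrict _
    fun _ ↦ (Set.finite_singleton x).subset Pi.mulSupport_mulSingle_subset

@[simp]
theorem coe_single (x : H) (a : Λ) : (single x a : H → Λ) = Pi.mulSingle x a := rfl

theorem single_injective (x : H) : Injective (single (Λ := Λ) x) :=
  fun _ _ h ↦ Pi.mulSingle_injective x (congrArg Subtype.val h)

theorem commute_single_single {x y : H} (hxy : x ≠ y) (a b : Λ) :
    Commute (single x a) (single y b) :=
  Subtype.ext (Pi.mulSingle_commute (f := fun _ ↦ Λ) hxy a b).eq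

theorem shiftAut_single [Group H] (h x : H) (a : Λ) :
    shiftAut Λ H h (single x a) = single (h * x) a := by
  ext y
  simp [shiftAut, shiftEquiv, Pi.mulSingle_apply, inv_mul_eq_iff_eq_mul]

end Single

def map {F : Type*} [Group F] (π : Λ →* F) : restrictedProduct H Λ →* restrictedProduct H F :=
  ((π.compLeft H).comp (restrictedProduct H Λ).subtype).codRestrict _
    fun f ↦ f.2.subset (mulSupport_comp_subset π.map_one _)

@[simp]
theorem coe_map {F : Type*} [Group F] (π : Λ →* F) (f : restrictedProduct H Λ) :
    (map π f : H → F) = π ∘ f := rfl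

theorem map_shiftAut [Group H] {F : Type*} [Group F] (π : Λ →* F) (h : H)
    (f : restrictedProduct H Λ) : map π (shiftAut Λ H h f) = shiftAut F H h (map π f) := rfl

section Pushforward

variable {A Q : Type*} [CommGroup A]

noncomputable def pushforward (π : Λ →* A) (q : H → Q) :
    restrictedProduct H Λ →* restrictedProduct Q A where
  toFun f := ⟨fun x ↦ ∏ᶠ y ∈ q ⁻¹' {x}, π ((f : H → Λ) y), (f.2.image q).subset fun x hx ↦ by
    by_contra hx'
    refine hx (finprod_mem_of_eqOn_one fun y hy ↦ ?_)
    simp only [Set.mem_image, Function.mem_mulSupport, not_exists, not_and] at hx'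
    simp [not_not.mp fun h ↦ hx' y h hy]⟩
  map_one' := by ext; simp
  map_mul' f g := by
    ext x
    have hfin (f : restrictedProduct H Λ) :
        (q ⁻¹' {x} ∩ mulSupport fun y ↦ π ((f : H → Λ) y)).Finite :=
      (f.2.subset (mulSupport_comp_subset π.map_one _)).inter_of_right _
    simpa using finprod_mem_mul_distrib' (hfin f) (hfin g)

theorem pushforward_apply (π : Λ →* A) (q : H → Q) (f : restrictedProduct H Λ) (x : Q) :
    (pushforward π q f : Q → A) x = ∏ᶠ y ∈ q ⁻¹' {x}, π ((f : H → Λ) y) := rfl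

theorem pushforward_apply_of_injOn (π : Λ →* A) {q : H → Q} {f : restrictedProduct H Λ}
    (hq : (mulSupport (f : H → Λ)).InjOn q) {y : H} (hy : (f : H → Λ) y ≠ 1) :
    (pushforward π q f : Q → A) (q y) = π ((f : H → Λ) y) := by
  rw [pushforward_apply, ← finprod_mem_singleton (a := y) (f := fun y ↦ π ((f : H → Λ) y))]
  refine finprod_mem_inter_mulSupport_eq' _ _ _ fun z hz ↦
    ⟨fun hzy ↦ hq (fun h ↦ hz (by simp [h])) hy hzy, fun h ↦ by simp_all⟩

theorem pushforward_shiftAut [Group H] [Group Q] (π : Λ →* A) (q : H →* Q) (h : H)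
    (f : restrictedProduct H Λ) :
    pushforward π q (shiftAut Λ H h f) = shiftAut A Q (q h) (pushforward π q f) := by
  ext x
  refine finprod_mem_eq_of_bijOn (h⁻¹ * ·) ⟨fun y hy ↦ ?_, (mul_right_injective _).injOn,
    fun z hz ↦ ⟨h * z, ?_, by simp⟩⟩ fun _ _ ↦ rfl <;> simp_all

end Pushforward

end restrictedProduct

instance SemidirectProduct.finite {N G : Type*} [Group N] [Group G] {φ : G →* MulAut N}
    [Finite N] [Finite G] : Finite (N ⋊[φ] G) :=
  Finite.of_equiv _ SemidirectProduct.equivProd.symm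

namespace Wreath

open SemidirectProduct restrictedProduct Group
open scoped commutatorElement

variable {Λ H : Type*} [Group Λ] [Group H]

-- `Λ ≀ H` unfolds `Wreath Λ H`, so that the API of `SemidirectProduct` applies to it.
local notation:35 Λ:36 " ≀ " H:36 => restrictedProduct H Λ ⋊[shiftAut Λ H] H

theorem residuallyFinite_factors (hW : ResiduallyFinite (Λ ≀ H)) :
    ResiduallyFinite Λ ∧ ResiduallyFinite H := by
  classical
  exact ⟨.of_injective ((inl (φ := shiftAut Λ H)).comp (single 1))
      (inl_injective.comp (single_injective 1)),
    .of_injective (inr (φ := shiftAut Λ H)) inr_injective⟩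

theorem map_commutatorElement_inl_single_eq_one [DecidableEq H] {F : Type*} [Group F]
    (π : Λ ≀ H →* F) {h : H} (hh : h ≠ 1) (hπh : π (inr h) = 1) (a b : Λ) :
    π ⁅(inl (single 1 a) : Λ ≀ H), inl (single 1 b)⁆ = 1 := by
  -- conjugation by `inr h` moves the copy of `Λ` at `1` to the copy at `h`, which commutes with it
  have hconj : π (inl (single h b)) = π (inl (single 1 b)) := by
    rw [← mul_one h, ← shiftAut_single, inl_aut]
    simp [hπh]
  rw [map_commutatorElement, commutatorElement_eq_one_iff_commute]
  exact hconj ▸ ((commute_single_single hh.symm a b).map inl).map π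

theorem not_residuallyFinite_of_infinite [Infinite H] {a b : Λ} (hab : ¬Commute a b) :
    ¬ResiduallyFinite (Λ ≀ H) := by
  classical
  intro hW
  have hinj : Injective (inl.comp (single 1) : Λ →* Λ ≀ H) :=
    inl_injective.comp (single_injective 1)
  obtain ⟨N, hN⟩ := exists_finiteIndexNormalSubgroup_notMem
    ⁅(inl (single 1 a) : Λ ≀ H), inl (single 1 b)⁆
    fun h ↦ hab ((commutatorElement_eq_one_iff_commute.mp h).of_map hinj)
  let π := QuotientGroup.mk' N.toSubgroup
  obtain ⟨h₁, h₂, hne, heq⟩ := Finite.exists_ne_map_eq_of_infinite (π.comp inr)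
  refine hN ((FiniteIndexNormalSubgroup.mem_toSubgroup_iff).mp ((QuotientGroup.eq_one_iff _).mp
    (map_commutatorElement_inl_single_eq_one π (h := h₁⁻¹ * h₂) ?_ ?_ a b)))
  · rwa [ne_eq, inv_mul_eq_one]
  · simpa [π, inv_mul_eq_one] using heq

theorem residuallyFinite_of_forall_inl [ResiduallyFinite H]
    (h : ∀ f : restrictedProduct H Λ, f ≠ 1 → ∃ N : FiniteIndexNormalSubgroup (Λ ≀ H),
      inl f ∉ N) :
    ResiduallyFinite (Λ ≀ H) := by
  refine residuallyFinite_iff_exists_finiteIndexNormalSubgroup.mpr fun g hg ↦ ?_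
  by_cases hr : g.right = 1
  · have hg_eq : g = inl g.left := by ext <;> simp [hr]
    rw [hg_eq] at hg ⊢
    exact h _ fun h1 ↦ hg (by rw [h1, map_one])
  · obtain ⟨N, hN⟩ := exists_finiteIndexNormalSubgroup_notMem _ hr
    exact ⟨N.comap rightHom, hN⟩

theorem exists_finiteIndexNormalSubgroup_inl_notMem {Λ' H' : Type*} [Group Λ'] [Group H']
    [Finite Λ'] [Finite H'] (fn : restrictedProduct H Λ →* restrictedProduct H' Λ')
    (fg : H →* H') (hfg : ∀ h, fn.comp (shiftAut Λ H h).toMonoidHom =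
      (shiftAut Λ' H' (fg h)).toMonoidHom.comp fn)
    {f : restrictedProduct H Λ} (hf : fn f ≠ 1) :
    ∃ N : FiniteIndexNormalSubgroup (Λ ≀ H), inl f ∉ N :=
  exists_finiteIndexNormalSubgroup_notMem_of_monoidHom (SemidirectProduct.map fn fg hfg)
    (by rwa [SemidirectProduct.map_inl, ne_eq, map_eq_one_iff _ inl_injective])

theorem residuallyFinite_of_finite [ResiduallyFinite Λ] [Finite H] :
    ResiduallyFinite (Λ ≀ H) := by
  refine residuallyFinite_of_forall_inl fun f hf ↦ ?_
  obtain ⟨y, hy⟩ := exists_apply_ne_one hf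
  obtain ⟨N, hN⟩ := exists_finiteIndexNormalSubgroup_notMem _ hy
  refine exists_finiteIndexNormalSubgroup_inl_notMem
    (restrictedProduct.map (QuotientGroup.mk' N.toSubgroup)) (MonoidHom.id H)
    (fun h ↦ MonoidHom.ext (map_shiftAut _ h)) fun h1 ↦ hN ?_
  have := congrFun (congrArg Subtype.val h1) y
  simpa [FiniteIndexNormalSubgroup.mem_toSubgroup_iff] using this

theorem residuallyFinite_of_commGroup {Λ : Type*} [CommGroup Λ] [ResiduallyFinite Λ]
    [ResiduallyFinite H] : ResiduallyFinite (Λ ≀ H) := by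
  refine residuallyFinite_of_forall_inl fun f hf ↦ ?_
  obtain ⟨y, hy⟩ := exists_apply_ne_one hf
  obtain ⟨N, hN⟩ := exists_finiteIndexNormalSubgroup_notMem _ hy
  obtain ⟨M, hM⟩ := exists_finiteIndexNormalSubgroup_injOn f.2
  let π := QuotientGroup.mk' N.toSubgroup
  let q := QuotientGroup.mk' M.toSubgroup
  refine exists_finiteIndexNormalSubgroup_inl_notMem (pushforward π q) q
    (fun h ↦ MonoidHom.ext (pushforward_shiftAut π q h)) fun h1 ↦ hN ?_
  have hfiber : (pushforward π q f : H ⧸ M.toSubgroup → Λ ⧸ N.toSubgroup) (q y) = π (f.1 y) :=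
    pushforward_apply_of_injOn π hM hy
  rw [h1] at hfiber
  exact FiniteIndexNormalSubgroup.mem_toSubgroup_iff.mp
    ((QuotientGroup.eq_one_iff _).mp hfiber.symm)

end Wreath

theorem wreath_rf_iff_general (Λ : Type u) (H : Type v) [Group Λ] [Group H] :
    IsRFGroup (Wreath Λ H) ↔
      (IsRFGroup Λ ∧ IsRFGroup H ∧ (Finite H ∨ ∀ a b : Λ, a * b = b * a)) := by
  simp only [isRFGroup_iff_residuallyFinite]
  constructor
  · intro hW
    obtain ⟨hΛ, hH⟩ := Wreath.residuallyFinite_factors hW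
    refine ⟨hΛ, hH, ?_⟩
    by_contra! ⟨hinf, a, b, hab⟩
    exact Wreath.not_residuallyFinite_of_infinite hab hW
  · rintro ⟨hΛ, hH, hfin | hcomm⟩
    · exact Wreath.residuallyFinite_of_finite
    · let _ : CommGroup Λ := { mul_comm := hcomm }
      exact Wreath.residuallyFinite_of_commGroup

theorem wreath_rf_iff (Λ : Type u) (H : Type v) [Group Λ] [Group H]
    [Countable Λ] [Countable H] [Nontrivial Λ] :
    IsRFGroup (Wreath Λ H) ↔
      (IsRFGroup Λ ∧ IsRFGroup H ∧ (Finite H ∨ ∀ a b : Λ, a * b = b * a)) :=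
  wreath_rf_iff_general Λ H
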